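/- Let m be a positive integer and let a be an integer with a ≤ m^2 − m − 1. Then there exists an integer n > 1 with π(n) = (n + a)/m; equivalently, there is a positive integer n with π(m·n − a) = n. -/

import Mathlib

/-!
The function `f n = m * π n - n` never drops by more than one from `n` to `n + 1`, so on its way
down it takes every integer value between its starting point and its limit. It does tend to `-∞`,
because `π n = o(n)` by Chebyshev's upper bound. And it reaches `m² - m - 1` at some `n ≥ 2`: for
`m ≥ 12` take `n = 2 ^ (m - 1)` and use the lower bound `2 ^ n ≤ (n + 1) * lcm(1, …, n) ≤
(n + 1) * n ^ π n`; for `m ≤ 11` one of `n = 2, 3, 13, 59` will do.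
-/

/-- The k-th prime, 1-indexed: `nthPrime 1 = 2`. -/
noncomputable def nthPrime (k : ℕ) : ℕ := Nat.nth Nat.Prime (k - 1)

/-- `IsS m S` says that `S` is the maximum of `{k*m - p_k : k ≥ 1}`. -/
def IsS (m : ℕ) (S : ℤ) : Prop :=
  IsGreatest {a : ℤ | ∃ k : ℕ, 0 < k ∧ a = (k : ℤ) * m - nthPrime k} S

open Nat Filter Topology Chebyshev
open scoped Nat.Prime

theorem exists_eq_of_sub_one_le_succ {f : ℕ → ℤ} (hf : ∀ n, f n - 1 ≤ f (n + 1)) {a : ℤ}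
    {n₀ N : ℕ} (hn₀N : n₀ ≤ N) (h₀ : a ≤ f n₀) (hN : f N < a) : ∃ n, n₀ ≤ n ∧ f n = a := by
  induction N, hn₀N using Nat.le_induction with
  | base => exact absurd h₀ hN.not_ge
  | succ N hn₀N ih =>
    by_cases hlt : f N < a
    · exact ih hlt
    · exact ⟨N, hn₀N, by linarith [hf N]⟩

theorem Chebyshev.lcmUpto_le_pow_primeCounting (n : ℕ) : lcmUpto n ≤ n ^ π n := by
  rw [lcmUpto_eq_prod_pow_log, ← primesLE_card_eq_primeCounting]
  refine Finset.prod_le_pow_card _ _ _ fun p hp => Nat.pow_log_le_self p ?_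
  have := two_le_of_mem_primesLE hp
  have := le_of_mem_primesLE hp
  omega

theorem two_pow_le_succ_mul_pow_primeCounting (n : ℕ) : 2 ^ n ≤ (n + 1) * n ^ π n :=
  (two_pow_le_mul_lcmUpto n).trans (Nat.mul_le_mul_left _ (lcmUpto_le_pow_primeCounting n))

theorem two_pow_le_mul_primeCounting_two_pow (k : ℕ) : 2 ^ k ≤ k * π (2 ^ k) + k + 1 := by
  have h := two_pow_le_succ_mul_pow_primeCounting (2 ^ k)
  have hsucc : 2 ^ k + 1 ≤ 2 ^ (k + 1) := by rw [pow_succ]; linarith [Nat.one_le_two_pow (n := k)]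
  rw [← pow_mul] at h
  have : 2 ^ 2 ^ k ≤ 2 ^ (k * π (2 ^ k) + k + 1) := by
    calc 2 ^ 2 ^ k ≤ (2 ^ k + 1) * 2 ^ (k * π (2 ^ k)) := h
      _ ≤ 2 ^ (k + 1) * 2 ^ (k * π (2 ^ k)) := Nat.mul_le_mul_right _ hsucc
      _ = 2 ^ (k * π (2 ^ k) + k + 1) := by rw [← pow_add]; ring_nf
  exact (Nat.pow_le_pow_iff_right (by norm_num)).mp this

theorem cube_add_le_two_pow {k : ℕ} (hk : 11 ≤ k) : k ^ 3 + 2 * k ^ 2 + k + 1 ≤ 2 ^ k := by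
  induction k, hk using Nat.le_induction with
  | base => norm_num
  | succ k hk ih => rw [pow_succ 2 k]; nlinarith [Nat.mul_le_mul_right (k * k) hk]

theorem exists_sq_sub_le_mul_primeCounting_sub (m : ℕ) (hm : 0 < m) :
    ∃ n, 2 ≤ n ∧ (m : ℤ) ^ 2 - m - 1 ≤ m * π n - n := by
  rcases le_or_gt m 11 with hsmall | hlarge
  · have h2 : π 2 = 1 := by decide
    have h3 : π 3 = 2 := by decide
    have h13 : π 13 = 6 := by decide
    have h59 : π 59 = 17 := by decide
    interval_cases m
    · exact ⟨2, le_rfl, by rw [h2]; norm_num⟩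
    · exact ⟨3, by norm_num, by rw [h3]; norm_num⟩
    iterate 2 exact ⟨13, by norm_num, by rw [h13]; norm_num⟩
    all_goals exact ⟨59, by norm_num, by rw [h59]; norm_num⟩
  · obtain ⟨k, rfl⟩ : ∃ k, m = k + 1 := ⟨m - 1, by omega⟩
    refine ⟨2 ^ k, ?_, ?_⟩
    · calc (2 : ℕ) = 2 ^ 1 := rfl
        _ ≤ 2 ^ k := Nat.pow_le_pow_right (by norm_num) (by omega)
    have hπ : (2 : ℤ) ^ k ≤ k * π (2 ^ k) + k + 1 := by
      exact_mod_cast two_pow_le_mul_primeCounting_two_pow k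
    have hpow : (k : ℤ) ^ 3 + 2 * k ^ 2 + k + 1 ≤ 2 ^ k := by
      exact_mod_cast cube_add_le_two_pow (by omega)
    have hk : (11 : ℤ) ≤ k := by exact_mod_cast (by omega : 11 ≤ k)
    refine le_of_mul_le_mul_left ?_ (by linarith : (0 : ℤ) < k)
    push_cast
    nlinarith

theorem tendsto_primeCounting_div_atTop :
    Tendsto (fun n : ℕ => (π n : ℝ) / n) atTop (𝓝 0) := by
  have hlog : Tendsto (fun n : ℕ => (Real.log 4 + 1) / Real.log n) atTop (𝓝 0) :=
    tendsto_const_nhds.div_atTop (Real.tendsto_log_atTop.comp tendsto_natCast_atTop_atTop)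
  refine tendsto_of_tendsto_of_tendsto_of_le_of_le' tendsto_const_nhds hlog
    (Eventually.of_forall fun n => by positivity) ?_
  filter_upwards [tendsto_natCast_atTop_atTop.eventually (eventually_primeCounting_le one_pos),
    eventually_gt_atTop 1] with n hn hn1
  have hlogn : 0 < Real.log n := Real.log_pos (by exact_mod_cast hn1)
  rw [Nat.floor_natCast] at hn
  rw [div_le_div_iff₀ (by positivity) hlogn]
  calc (π n : ℝ) * Real.log n ≤ (Real.log 4 + 1) * n / Real.log n * Real.log n := by gcongr
    _ = (Real.log 4 + 1) * n := by field_simp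

theorem eventually_mul_primeCounting_lt (m : ℕ) (a : ℤ) :
    ∀ᶠ n : ℕ in atTop, (m : ℤ) * π n < n + a := by
  have hsmall := (tendsto_primeCounting_div_atTop.const_mul (m : ℝ)).eventually
    (gt_mem_nhds (by norm_num : (m : ℝ) * 0 < 1 / 2))
  filter_upwards [hsmall, eventually_gt_atTop 0, eventually_gt_atTop (2 * a).natAbs]
    with n hn hn0 hna
  have hn' : (m : ℝ) * π n < n / 2 := by
    rwa [← mul_div_assoc, div_lt_iff₀ (by positivity), div_mul_eq_mul_div, one_mul] at hn
  have ha : -(2 * a) < n := by omega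
  have ha' : (-(2 * a) : ℝ) < n := by exact_mod_cast ha
  have : (m : ℝ) * π n < n + a := by linarith
  exact_mod_cast this

theorem stmt9 (m : ℕ) (hm : 0 < m) (a : ℤ) (ha : a ≤ (m : ℤ) ^ 2 - m - 1) :
    (∃ n : ℕ, 1 < n ∧ (m : ℤ) * Nat.primeCounting n = n + a) ∧
    (∃ n : ℕ, 0 < n ∧ ∃ N : ℕ, (N : ℤ) = (m : ℤ) * n - a ∧ Nat.primeCounting N = n) := by
  obtain ⟨n₀, hn₀, hstart⟩ := exists_sq_sub_le_mul_primeCounting_sub m hm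
  obtain ⟨N, hn₀N, hend⟩ :=
    ((eventually_ge_atTop n₀).and (eventually_mul_primeCounting_lt m a)).exists
  have hstep (n : ℕ) : (m : ℤ) * π n - n - 1 ≤ m * π (n + 1) - ↑(n + 1) := by
    have : (m : ℤ) * π n ≤ m * π (n + 1) := by gcongr; exact monotone_primeCounting n.le_succ
    push_cast
    linarith
  obtain ⟨n, hn₀n, hn⟩ := exists_eq_of_sub_one_le_succ (f := fun n => (m : ℤ) * π n - n)
    hstep hn₀N (ha.trans hstart) (by linarith)
  have hπn : 0 < π n := Nat.pos_of_ne_zero (primeCounting_eq_zero_iff.not.mpr (by omega))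
  exact ⟨⟨n, by omega, by linarith⟩, π n, hπn, n, by linarith, rfl⟩
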